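/- Finiteness and ordering of the window indices: suppose A is unstable, i.e., |λ_1(A)| > 1 where |λ_1(A)| is the largest magnitude of an eigenvalue of A. Let P̄ be a positive definite matrix with g(P̄) = P̄ and P̄ ≤ M. Then for every real number C ≥ Tr(M), the sets {k ≥ 1 : Tr(h^k(M)) > C} and {k ≥ 1 : Tr(h^k(P̄)) > C} are both nonempty, and their minima satisfy Ī(C) := min{k ≥ 1 : Tr(h^k(M)) > C} ≤ min{k ≥ 1 : Tr(h^k(P̄)) > C} =: I̲(C) < ∞. -/

import Mathlib

open Filter Matrix

noncomputable section

/-- The operator `h(X) = A X Aᵀ + Q`. -/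
def hOp {n : ℕ} (A Q : Matrix (Fin n) (Fin n) ℝ) (X : Matrix (Fin n) (Fin n) ℝ) :
    Matrix (Fin n) (Fin n) ℝ :=
  A * X * Aᵀ + Q

/-- The operator `g(X) = A X Aᵀ + Q − A X Cᵀ (C X Cᵀ + R)⁻¹ C X Aᵀ`. -/
def gOp {n m : ℕ} (A Q : Matrix (Fin n) (Fin n) ℝ) (C : Matrix (Fin m) (Fin n) ℝ)
    (R : Matrix (Fin m) (Fin m) ℝ) (X : Matrix (Fin n) (Fin n) ℝ) :
    Matrix (Fin n) (Fin n) ℝ :=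
  A * X * Aᵀ + Q - A * X * Cᵀ * (C * X * Cᵀ + R)⁻¹ * (C * X * Aᵀ)

/-- The stacked observability matrix `[C; CA; …; CA^(k−1)]`. -/
def obsMat {n m : ℕ} (C : Matrix (Fin m) (Fin n) ℝ) (A : Matrix (Fin n) (Fin n) ℝ) (k : ℕ) :
    Matrix (Fin k × Fin m) (Fin n) ℝ :=
  fun p j => (C * A ^ (p.1 : ℕ)) p.2 j

/-- The observability index. -/
def obsIdx {n m : ℕ} (C : Matrix (Fin m) (Fin n) ℝ) (A : Matrix (Fin n) (Fin n) ℝ) : ℕ :=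
  sInf {k : ℕ | 0 < k ∧ (obsMat C A k).rank = n}

/-- The matrix `J = [(CA^(Io−1))ᵀ, (CA^(Io−2))ᵀ, …, Cᵀ]ᵀ`. -/
def Jmat {n m : ℕ} (C : Matrix (Fin m) (Fin n) ℝ) (A : Matrix (Fin n) (Fin n) ℝ) (Io : ℕ) :
    Matrix (Fin Io × Fin m) (Fin n) ℝ :=
  fun p j => (C * A ^ (Io - 1 - (p.1 : ℕ))) p.2 j

/-- The block matrix `H`, whose `(i,j)` block (`0`-indexed) is `C A^(j−i)` if `j ≥ i`
and `0` otherwise. -/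
def Hmat {n m : ℕ} (C : Matrix (Fin m) (Fin n) ℝ) (A : Matrix (Fin n) (Fin n) ℝ) (Io : ℕ) :
    Matrix (Fin Io × Fin m) (Fin (Io - 1) × Fin n) ℝ :=
  fun p q =>
    if (p.1 : ℕ) ≤ (q.1 : ℕ) then (C * A ^ ((q.1 : ℕ) - (p.1 : ℕ))) p.2 q.2 else 0

/-- The block-diagonal matrix `diag(B, …, B)` with `k` diagonal blocks. -/
def blkDiag {k l : ℕ} (B : Matrix (Fin l) (Fin l) ℝ) :
    Matrix (Fin k × Fin l) (Fin k × Fin l) ℝ :=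
  fun p q => if p.1 = q.1 then B p.2 q.2 else 0

/-- The matrix `M₀ = (JᵀJ)⁻¹ Jᵀ (H diag(Q,…,Q) Hᵀ + diag(R,…,R)) J (JᵀJ)⁻¹`. -/
def M0mat {n m : ℕ} (C : Matrix (Fin m) (Fin n) ℝ) (A : Matrix (Fin n) (Fin n) ℝ)
    (Q : Matrix (Fin n) (Fin n) ℝ) (R : Matrix (Fin m) (Fin m) ℝ) (Io : ℕ) :
    Matrix (Fin n) (Fin n) ℝ :=
  (((Jmat C A Io)ᵀ * Jmat C A Io)⁻¹ * (Jmat C A Io)ᵀ : Matrix (Fin n) (Fin Io × Fin m) ℝ) *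
    ((Hmat C A Io * blkDiag Q : Matrix (Fin Io × Fin m) (Fin (Io - 1) × Fin n) ℝ) *
      (Hmat C A Io)ᵀ + blkDiag R) *
    Jmat C A Io * ((Jmat C A Io)ᵀ * Jmat C A Io)⁻¹

/-- The matrix `M = h^(Io)(M₀)`. -/
def Mmat {n m : ℕ} (C : Matrix (Fin m) (Fin n) ℝ) (A : Matrix (Fin n) (Fin n) ℝ)
    (Q : Matrix (Fin n) (Fin n) ℝ) (R : Matrix (Fin m) (Fin m) ℝ) (Io : ℕ) :
    Matrix (Fin n) (Fin n) ℝ :=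
  (hOp A Q)^[Io] (M0mat C A Q R Io)

/-- The square root of a positive semidefinite matrix (the Mathlib definition of Dec 2024). -/
def Matrix.PosSemidef.sqrt {k : Type*} [Fintype k] [DecidableEq k]
    {A : Matrix k k ℝ} (hA : A.PosSemidef) : Matrix k k ℝ :=
  hA.1.eigenvectorUnitary.1 * diagonal ((√·) ∘ hA.1.eigenvalues) *
    (star hA.1.eigenvectorUnitary : Matrix k k ℝ)

/-- The controllability matrix `[S, AS, …, A^(n−1) S]`. -/
def ctrbMat {n : ℕ} (A : Matrix (Fin n) (Fin n) ℝ) (S : Matrix (Fin n) (Fin n) ℝ) :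
    Matrix (Fin n) (Fin n × Fin n) ℝ :=
  fun i p => (A ^ (p.1 : ℕ) * S) i p.2

/-- The largest magnitude of a (complex) eigenvalue, i.e. the spectral radius `|λ₁|`. -/
def specRad {n : ℕ} (M : Matrix (Fin n) (Fin n) ℂ) : ℝ :=
  sSup {x : ℝ | ∃ μ ∈ spectrum ℂ M, x = ‖μ‖}

lemma psd_trace_nonneg {n : ℕ} {S : Matrix (Fin n) (Fin n) ℝ} (hS : S.PosSemidef) :
    0 ≤ S.trace := by
  rw [Matrix.trace]
  apply Finset.sum_nonneg
  intro i _
  exact hS.diag_nonneg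

lemma trace_le_of_psd_sub {n : ℕ} {S T : Matrix (Fin n) (Fin n) ℝ} (h : (T - S).PosSemidef) :
    S.trace ≤ T.trace := by
  have := psd_trace_nonneg h
  rw [Matrix.trace_sub] at this
  linarith

lemma hOp_iter_sub_psd {n : ℕ} (A Q : Matrix (Fin n) (Fin n) ℝ) (hQ : Q.PosSemidef)
    (X : Matrix (Fin n) (Fin n) ℝ) :
    ∀ k, ((hOp A Q)^[k] X - A ^ k * X * (A ^ k)ᵀ).PosSemidef := by
  intro k
  induction k with
  | zero => simpa using Matrix.PosSemidef.zero
  | succ k ih =>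
    rw [Function.iterate_succ_apply']
    have key : (hOp A Q) ((hOp A Q)^[k] X) - A ^ (k+1) * X * (A ^ (k+1))ᵀ
        = A * ((hOp A Q)^[k] X - A ^ k * X * (A ^ k)ᵀ) * Aᵀ + Q := by
      rw [hOp, pow_succ']
      simp only [Matrix.transpose_mul, Matrix.mul_sub, Matrix.sub_mul, mul_assoc]
      abel
    rw [key]
    have h1 : (A * ((hOp A Q)^[k] X - A ^ k * X * (A ^ k)ᵀ) * Aᵀ).PosSemidef := by
      simpa using ih.mul_mul_conjTranspose_same A
    exact h1.add hQ

lemma hOp_iter_mono {n : ℕ} (A Q : Matrix (Fin n) (Fin n) ℝ)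
    {X Y : Matrix (Fin n) (Fin n) ℝ} (h : (X - Y).PosSemidef) (k : ℕ) :
    ((hOp A Q)^[k] X - (hOp A Q)^[k] Y).PosSemidef := by
  induction k with
  | zero => simpa using h
  | succ k ih =>
    rw [Function.iterate_succ_apply', Function.iterate_succ_apply']
    have key : hOp A Q ((hOp A Q)^[k] X) - hOp A Q ((hOp A Q)^[k] Y)
        = A * ((hOp A Q)^[k] X - (hOp A Q)^[k] Y) * Aᵀ := by
      rw [hOp, hOp]
      simp only [Matrix.mul_sub, Matrix.sub_mul]
      abel
    rw [key]
    simpa using ih.mul_mul_conjTranspose_same A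

lemma posdef_lower {n : ℕ} (hn : 0 < n) {P : Matrix (Fin n) (Fin n) ℝ} (hP : P.PosDef) :
    ∃ c : ℝ, 0 < c ∧ (P - c • 1).PosSemidef := by
  have hne : (Finset.univ : Finset (Fin n)).Nonempty := by
    rw [Finset.univ_nonempty_iff]
    exact Fin.pos_iff_nonempty.mp hn
  set c := Finset.univ.inf' hne hP.1.eigenvalues with hc
  refine ⟨c, ?_, ?_⟩
  · obtain ⟨i, _, hi⟩ := Finset.exists_mem_eq_inf' hne hP.1.eigenvalues
    rw [hc, hi]; exact hP.eigenvalues_pos i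
  · have hspec := hP.1.spectral_theorem
    set U := (hP.1.eigenvectorUnitary : Matrix (Fin n) (Fin n) ℝ) with hUdef
    have hU : U * star U = 1 := mem_unitaryGroup_iff.mp hP.1.eigenvectorUnitary.2
    have hspec' : U * diagonal hP.1.eigenvalues * star U = P := by
      simpa using hspec.symm
    have hdc : diagonal (fun i => hP.1.eigenvalues i - c) =
        diagonal hP.1.eigenvalues - c • (1 : Matrix (Fin n) (Fin n) ℝ) := by
      ext i j
      by_cases h : i = j <;>
        simp [Matrix.diagonal, Matrix.one_apply, h]
    have key : P - c • 1 = U * diagonal (fun i => hP.1.eigenvalues i - c) * star U := by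
      rw [hdc, Matrix.mul_sub, Matrix.sub_mul, hspec']
      congr 1
      rw [mul_smul_comm, mul_one, smul_mul_assoc, hU]
    rw [key]
    refine (posSemidef_diagonal_iff.2 fun i => ?_).mul_mul_conjTranspose_same U
    simp only [sub_nonneg]
    exact Finset.inf'_le _ (Finset.mem_univ i)

lemma exists_eigvec {n : ℕ} (M : Matrix (Fin n) (Fin n) ℂ) {μ : ℂ} (hμ : μ ∈ spectrum ℂ M) :
    ∃ v : Fin n → ℂ, v ≠ 0 ∧ M *ᵥ v = μ • v := by
  have h1 : μ ∈ spectrum ℂ (Matrix.toLinAlgEquiv' M) := by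
    rw [AlgEquiv.spectrum_eq]; exact hμ
  have h2 : Matrix.toLinAlgEquiv' M = Matrix.toLin' M := by
    apply LinearMap.ext; intro v
    rw [Matrix.toLinAlgEquiv'_apply, Matrix.toLin'_apply]
  have hev : Module.End.HasEigenvalue (Matrix.toLin' M) μ := by
    rw [Module.End.hasEigenvalue_iff_mem_spectrum, ← h2]; exact h1
  obtain ⟨v, hv⟩ := hev.exists_hasEigenvector
  exact ⟨v, hv.2, by rw [← Matrix.toLin'_apply]; exact hv.apply_eq_smul⟩

lemma pow_mulVec_eig {n : ℕ} {M : Matrix (Fin n) (Fin n) ℂ} {μ : ℂ} {v : Fin n → ℂ}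
    (h : M *ᵥ v = μ • v) (k : ℕ) : (M ^ k) *ᵥ v = (μ ^ k) • v := by
  induction k with
  | zero => simp
  | succ k ih =>
    rw [pow_succ', ← Matrix.mulVec_mulVec, ih, Matrix.mulVec_smul, h, smul_smul]
    rw [pow_succ]

lemma mulVec_frob_bound {n : ℕ} (M : Matrix (Fin n) (Fin n) ℂ) (v : Fin n → ℂ) :
    ∑ i, ‖(M *ᵥ v) i‖ ^ 2 ≤ (∑ i, ∑ j, ‖M i j‖ ^ 2) * ∑ j, ‖v j‖ ^ 2 := by
  rw [Finset.sum_mul]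
  apply Finset.sum_le_sum
  intro i _
  calc ‖(M *ᵥ v) i‖ ^ 2 ≤ (∑ j, ‖M i j‖ * ‖v j‖) ^ 2 := by
        apply pow_le_pow_left₀ (norm_nonneg _)
        rw [Matrix.mulVec, dotProduct]
        refine le_trans (norm_sum_le _ _) ?_
        apply Finset.sum_le_sum
        intro j _
        rw [norm_mul]
    _ ≤ (∑ j, ‖M i j‖ ^ 2) * ∑ j, ‖v j‖ ^ 2 :=
        Finset.sum_mul_sq_le_sq_mul_sq _ _ _

lemma map_ofReal_pow {n : ℕ} (A : Matrix (Fin n) (Fin n) ℝ) (k : ℕ) :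
    (A.map Complex.ofReal) ^ k = (A ^ k).map Complex.ofReal := by
  have := map_pow (Complex.ofRealHom.mapMatrix (m := Fin n)) A k
  simp only [RingHom.mapMatrix_apply] at this
  exact this.symm

/-- The key growth bound. -/
lemma trace_pow_lower {n : ℕ} (hn : 0 < n) (A Q : Matrix (Fin n) (Fin n) ℝ)
    (hQ : Q.PosSemidef) {P : Matrix (Fin n) (Fin n) ℝ} (hP : P.PosDef)
    {μ : ℂ} (hμ : μ ∈ spectrum ℂ (A.map Complex.ofReal)) :
    ∃ c : ℝ, 0 < c ∧ ∀ k, c * ‖μ‖ ^ (2 * k) ≤ ((hOp A Q)^[k] P).trace := by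
  obtain ⟨c, hc, hPc⟩ := posdef_lower hn hP
  obtain ⟨v, hv0, hvEig⟩ := exists_eigvec _ hμ
  set V := ∑ j, ‖v j‖ ^ 2 with hVdef
  have hV : 0 < V := by
    obtain ⟨j, hj⟩ := Function.ne_iff.mp hv0
    refine Finset.sum_pos' (fun j _ => by positivity) ⟨j, Finset.mem_univ j, ?_⟩
    have : 0 < ‖v j‖ := norm_pos_iff.mpr hj
    positivity
  refine ⟨c, hc, fun k => ?_⟩
  set B := A ^ k with hBdef
  have e1 : ((A.map Complex.ofReal) ^ k) *ᵥ v = (μ ^ k) • v := pow_mulVec_eig hvEig k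
  have e2 : ∑ i, ‖((μ ^ k) • v) i‖ ^ 2 = ‖μ‖ ^ (2 * k) * V := by
    rw [hVdef, Finset.mul_sum]
    refine Finset.sum_congr rfl fun i _ => ?_
    rw [Pi.smul_apply, norm_smul, mul_pow, norm_pow, ← pow_mul, mul_comm k 2]
  have e3 := mulVec_frob_bound ((A.map Complex.ofReal) ^ k) v
  rw [e1, e2] at e3
  have e4 : (∑ i, ∑ j, ‖((A.map Complex.ofReal) ^ k) i j‖ ^ 2) = ∑ i, ∑ j, (B i j) ^ 2 := by
    rw [map_ofReal_pow]
    refine Finset.sum_congr rfl fun i _ => Finset.sum_congr rfl fun j _ => ?_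
    rw [Matrix.map_apply, Complex.norm_real, Real.norm_eq_abs, sq_abs]
  have e5 : ‖μ‖ ^ (2 * k) ≤ ∑ i, ∑ j, (B i j) ^ 2 := by
    rw [e4] at e3
    exact le_of_mul_le_mul_right e3 hV
  have tfrob : (B * Bᵀ).trace = ∑ i, ∑ j, (B i j) ^ 2 := by
    simp [Matrix.trace, Matrix.mul_apply, Matrix.diag, sq]
  have psd1 : (B * (P - c • 1) * Bᵀ).PosSemidef := by
    simpa using hPc.mul_mul_conjTranspose_same B
  have expand : B * (P - c • 1) * Bᵀ = B * P * Bᵀ - c • (B * Bᵀ) := by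
    rw [Matrix.mul_sub, Matrix.sub_mul]
    congr 1
    rw [mul_smul_comm, mul_one, smul_mul_assoc]
  have t2 : c * (B * Bᵀ).trace ≤ (B * P * Bᵀ).trace := by
    have h0 := psd_trace_nonneg psd1
    rw [expand, Matrix.trace_sub, Matrix.trace_smul] at h0
    simpa [smul_eq_mul] using sub_nonneg.mp h0
  have t3 : (B * P * Bᵀ).trace ≤ ((hOp A Q)^[k] P).trace :=
    trace_le_of_psd_sub (hOp_iter_sub_psd A Q hQ P k)
  calc c * ‖μ‖ ^ (2 * k) ≤ c * ∑ i, ∑ j, (B i j) ^ 2 :=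
        mul_le_mul_of_nonneg_left e5 hc.le
    _ = c * (B * Bᵀ).trace := by rw [tfrob]
    _ ≤ (B * P * Bᵀ).trace := t2
    _ ≤ ((hOp A Q)^[k] P).trace := t3

/-- Finiteness and ordering of the window indices: if `A` is unstable, then for every
`C ≥ Tr(M)` the sets defining `Ī(C)` and `I̲(C)` are nonempty and `Ī(C) ≤ I̲(C)`. -/
theorem window_indices_finite_and_le
    {n m : ℕ} (hn : 0 < n) (hm : 0 < m)
    (A : Matrix (Fin n) (Fin n) ℝ) (hA : IsUnit A.det)
    (hUnstable : 1 < specRad (A.map Complex.ofReal))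
    (C : Matrix (Fin m) (Fin n) ℝ) (hObs : (obsMat C A n).rank = n)
    (Q : Matrix (Fin n) (Fin n) ℝ) (hQ : Q.PosSemidef)
    (hCtrb : (ctrbMat A hQ.sqrt).rank = n)
    (R : Matrix (Fin m) (Fin m) ℝ) (hR : R.PosDef)
    (Pbar : Matrix (Fin n) (Fin n) ℝ) (hPbar : Pbar.PosDef)
    (hPbarFix : gOp A Q C R Pbar = Pbar)
    (hPbarLe : (Mmat C A Q R (obsIdx C A) - Pbar).PosSemidef)
    (Creal : ℝ) (hC : (Mmat C A Q R (obsIdx C A)).trace ≤ Creal) :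
    {k : ℕ | 1 ≤ k ∧ Creal < ((hOp A Q)^[k] (Mmat C A Q R (obsIdx C A))).trace}.Nonempty ∧
    {k : ℕ | 1 ≤ k ∧ Creal < ((hOp A Q)^[k] Pbar).trace}.Nonempty ∧
    sInf {k : ℕ | 1 ≤ k ∧ Creal < ((hOp A Q)^[k] (Mmat C A Q R (obsIdx C A))).trace} ≤
      sInf {k : ℕ | 1 ≤ k ∧ Creal < ((hOp A Q)^[k] Pbar).trace} := by
  
  classical
  have hex : ∃ μ ∈ spectrum ℂ (A.map Complex.ofReal), 1 < ‖μ‖ := by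
    by_contra h
    push_neg at h
    have hle : specRad (A.map Complex.ofReal) ≤ 1 := by
      apply Real.sSup_le
      · rintro x ⟨μ, hμ, rfl⟩
        exact h μ hμ
      · exact zero_le_one
    linarith
  obtain ⟨μ, hμspec, hμ1⟩ := hex
  obtain ⟨c, hc, hbound⟩ := trace_pow_lower hn A Q hQ hPbar hμspec
  have h2 : 1 < ‖μ‖ ^ 2 := one_lt_pow₀ hμ1 two_ne_zero
  obtain ⟨N, hN⟩ := pow_unbounded_of_one_lt (Creal / c) h2
  set k := N + 1 with hk
  have hCk : Creal < c * ‖μ‖ ^ (2 * k) := by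
    have h3 : (‖μ‖ ^ 2) ^ N ≤ (‖μ‖ ^ 2) ^ k :=
      pow_le_pow_right₀ h2.le (Nat.le_succ N)
    have h4 : Creal / c < (‖μ‖ ^ 2) ^ k := lt_of_lt_of_le hN h3
    have h5 := (div_lt_iff₀ hc).mp h4
    calc Creal < (‖μ‖ ^ 2) ^ k * c := h5
    _ = c * ‖μ‖ ^ (2 * k) := by rw [← pow_mul]; ring
  have hkP : k ∈ {k : ℕ | 1 ≤ k ∧ Creal < ((hOp A Q)^[k] Pbar).trace} :=
    ⟨Nat.le_add_left 1 N, lt_of_lt_of_le hCk (hbound k)⟩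
  have hsub : {k : ℕ | 1 ≤ k ∧ Creal < ((hOp A Q)^[k] Pbar).trace} ⊆
      {k : ℕ | 1 ≤ k ∧ Creal < ((hOp A Q)^[k] (Mmat C A Q R (obsIdx C A))).trace} := by
    rintro j ⟨hj1, hj2⟩
    exact ⟨hj1, lt_of_lt_of_le hj2 (trace_le_of_psd_sub (hOp_iter_mono A Q hPbarLe j))⟩
  exact ⟨⟨k, hsub hkP⟩, ⟨k, hkP⟩, Nat.sInf_le (hsub (Nat.sInf_mem ⟨k, hkP⟩))⟩
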